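/- For every integer n ≥ 1, the commutator of the Dirac operator with the diagonal representation of KⁿLⁿ has operator norm one: ‖[D, π(KⁿLⁿ)]‖ = 1. -/

import Mathlib

open MeasureTheory ContinuousLinearMap
open scoped RealInnerProductSpace InnerProductSpace ENNReal

noncomputable section

/-- The shift space `Ω = {0,1}^ℕ`, with `false` playing the role of the symbol `0`
and `true` of the symbol `1`. -/
abbrev Ω : Type := ℕ → Bool

/-- The shift map `σ`, `σ(x)ₙ = x_{n+1}`. -/
def shiftMap : Ω → Ω := fun x n => x (n + 1)

/-- Prepending a symbol: `consSeq a x = ax`. -/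
def consSeq (a : Bool) (x : Ω) : Ω := fun n => Nat.casesOn n a (fun k => x k)

/-- The cylinder set `[w]` of sequences beginning with the finite word `w`. -/
def cylinder (w : List Bool) : Set Ω := {x | ∀ i : Fin w.length, x (i : ℕ) = w.get i}

/-- The Hilbert space `L²(μ)` (real). -/
abbrev E (μ : Measure Ω) := Lp (α := Ω) ℝ 2 μ

/-- The Hilbert space `H = L²(μ) × L²(μ)` with the norm `√(‖φ‖² + ‖ψ‖²)`. -/
abbrev HS (μ : Measure Ω) := WithLp 2 (E μ × E μ)

variable {μ : Measure Ω}

/-- The diagonal block operator `(φ, ψ) ↦ (A₁φ, A₂ψ)` on `H`. -/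
def blockDiag (A₁ A₂ : E μ →L[ℝ] E μ) : HS μ →L[ℝ] HS μ :=
  ((WithLp.prodContinuousLinearEquiv 2 ℝ (E μ) (E μ)).symm.toContinuousLinearMap).comp
    (((A₁.comp (ContinuousLinearMap.fst ℝ (E μ) (E μ))).prod
        (A₂.comp (ContinuousLinearMap.snd ℝ (E μ) (E μ)))).comp
      (WithLp.prodContinuousLinearEquiv 2 ℝ (E μ) (E μ)).toContinuousLinearMap)

/-- The antidiagonal block operator `(φ, ψ) ↦ (A₁ψ, A₂φ)` on `H`. -/
def blockAntidiag (A₁ A₂ : E μ →L[ℝ] E μ) : HS μ →L[ℝ] HS μ :=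
  ((WithLp.prodContinuousLinearEquiv 2 ℝ (E μ) (E μ)).symm.toContinuousLinearMap).comp
    (((A₁.comp (ContinuousLinearMap.snd ℝ (E μ) (E μ))).prod
        (A₂.comp (ContinuousLinearMap.fst ℝ (E μ) (E μ)))).comp
      (WithLp.prodContinuousLinearEquiv 2 ℝ (E μ) (E μ)).toContinuousLinearMap)

/-- The diagonal representation `π(A)(φ,ψ) = (Aφ, Aψ)`. -/
def diagRep (A : E μ →L[ℝ] E μ) : HS μ →L[ℝ] HS μ := blockDiag A A

/-- The Dirac operator `D(φ,ψ) = (Kψ, Lφ)` associated with the pair `(K, L)`. -/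
def dirac (K L : E μ →L[ℝ] E μ) : HS μ →L[ℝ] HS μ := blockAntidiag K L

/-- The commutator `[D, π(A)]`. -/
def commD (K L A : E μ →L[ℝ] E μ) : HS μ →L[ℝ] HS μ :=
  (dirac K L).comp (diagRep A) - (diagRep A).comp (dirac K L)

/-- The rank-one orthogonal projection onto the span of the unit vector `ψ`:
`φ ↦ ⟪ψ, φ⟫ • ψ`. -/
def rankOneProj (ψ : E μ) : E μ →L[ℝ] E μ := (innerSL ℝ ψ).smulRight ψ

/-- The Haar-basis element `e_w = 2^{ℓ(w)/2} (χ_{[w1]} - χ_{[w0]})`, as a function on `Ω`. -/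
def haarFun (w : List Bool) : Ω → ℝ := fun x =>
  (2 : ℝ) ^ ((w.length : ℝ) / 2) *
    ((cylinder (w ++ [true])).indicator 1 x - (cylinder (w ++ [false])).indicator 1 x)

lemma continuous_shiftMap : Continuous shiftMap :=
  continuous_pi fun n => continuous_apply (n + 1)

lemma continuous_consSeq (a : Bool) : Continuous (consSeq a) := by
  apply continuous_pi
  intro n
  cases n with
  | zero => exact continuous_const
  | succ k => exact continuous_apply k

/-- The Koopman operator on continuous functions: `f ↦ f ∘ σ`. -/
def koopmanC (f : C(Ω, ℝ)) : C(Ω, ℝ) := f.comp ⟨shiftMap, continuous_shiftMap⟩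

/-- The Ruelle operator on continuous functions: `(Lf)(x) = (f(0x) + f(1x))/2`. -/
def ruelleC (f : C(Ω, ℝ)) : C(Ω, ℝ) :=
  ⟨fun x => (f (consSeq false x) + f (consSeq true x)) / 2,
    ((f.continuous.comp (continuous_consSeq false)).add
      (f.continuous.comp (continuous_consSeq true))).div_const 2⟩

end

/-!
Write `P = KⁿLⁿ`. The commutator `[D, π(P)]` is the antidiagonal block operator with entries
`[K, P]` and `[L, P]`, so its norm is the larger of their norms. Since `LK = 1`, `K` is an isometry
and `Q = 1 - KL` is an orthogonal projection, and a direct computation gives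
`[K, P] = -Kⁿ Q Lⁿ⁻¹` and `[L, P] = Kⁿ⁻¹ Q Lⁿ`. Both therefore have norm at most `1`, while
`[K, P] Kⁿ⁻¹ = -Kⁿ Q` has norm `‖Q‖`, which is `1` as soon as `Q ≠ 0`. Finally `Q ≠ 0` because `L`
kills the function `x ↦ ±1` (sign according to `x₀`); the Ruelle formula may be evaluated on it
because prepending a symbol is a nonsingular map for the Bernoulli measure.
-/

theorem IsStarProjection.norm_eq_one {A : Type*} [NonUnitalNormedRing A] [StarRing A]
    [CStarRing A] {e : A} (he : IsStarProjection e) (h0 : e ≠ 0) : ‖e‖ = 1 := by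
  have h := CStarRing.norm_star_mul_self (x := e)
  rw [he.isSelfAdjoint.star_eq, he.isIdempotentElem.eq] at h
  exact (mul_eq_left₀ (norm_ne_zero_iff.mpr h0)).mp h.symm

section LeftInverse

variable {R : Type*} [Ring R] {v w : R}

theorem lie_pow_mul_pow_left (h : w * v = 1) (m : ℕ) :
    ⁅v, v ^ (m + 1) * w ^ (m + 1)⁆ = v ^ (m + 1) * (v * w - 1) * w ^ m := by
  have hw : w ^ (m + 1) * v = w ^ m := by rw [pow_succ, mul_assoc, h, mul_one]
  rw [Ring.lie_def, mul_assoc _ _ v, hw, ← mul_assoc, ← pow_succ', pow_succ, pow_succ' w]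
  noncomm_ring

theorem lie_pow_mul_pow_right (h : w * v = 1) (m : ℕ) :
    ⁅w, v ^ (m + 1) * w ^ (m + 1)⁆ = v ^ m * (1 - v * w) * w ^ (m + 1) := by
  have hv : w * v ^ (m + 1) = v ^ m := by rw [pow_succ', ← mul_assoc, h, one_mul]
  rw [Ring.lie_def, ← mul_assoc, hv, mul_assoc, ← pow_succ, pow_succ' w (m + 1), pow_succ v m]
  noncomm_ring

end LeftInverse

section Isometry

variable {A : Type*} [NormedRing A] [StarRing A] {v : A}

theorem isStarProjection_mul_star_of_star_mul_self_eq_one (hv : star v * v = 1) :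
    IsStarProjection (v * star v) where
  isIdempotentElem := by rw [IsIdempotentElem, mul_assoc, ← mul_assoc (star v), hv, one_mul]
  isSelfAdjoint := IsSelfAdjoint.mul_star_self v

variable [CStarRing A]

theorem norm_mul_of_star_mul_self_eq_one (hv : star v * v = 1) (x : A) : ‖v * x‖ = ‖x‖ := by
  have h : ‖v * x‖ * ‖v * x‖ = ‖x‖ * ‖x‖ := by
    rw [← CStarRing.norm_star_mul_self, ← CStarRing.norm_star_mul_self, star_mul, mul_assoc,
      ← mul_assoc (star v), hv, one_mul]
  exact (mul_self_inj (norm_nonneg _) (norm_nonneg _)).mp h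

theorem norm_le_one_of_star_mul_self_eq_one (hv : star v * v = 1) : ‖v‖ ≤ 1 :=
  calc ‖v‖ = ‖v * 1‖ := by rw [mul_one]
    _ = ‖(1 : A)‖ := norm_mul_of_star_mul_self_eq_one hv 1
    _ ≤ 1 := (IsStarProjection.one A).norm_le

theorem norm_pow_le_one_of_star_mul_self_eq_one (hv : star v * v = 1) (n : ℕ) :
    ‖v ^ n‖ ≤ 1 :=
  norm_le_one_of_star_mul_self_eq_one (by rw [star_pow]; exact pow_mul_pow_eq_one n hv)

theorem norm_pow_mul_mul_star_sub_one (hv : star v * v = 1) (n : ℕ) :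
    ‖v ^ n * (v * star v - 1)‖ = ‖1 - v * star v‖ := by
  rw [norm_mul_of_star_mul_self_eq_one (by rw [star_pow]; exact pow_mul_pow_eq_one n hv),
    ← norm_neg, neg_sub]

theorem norm_lie_pow_mul_star_pow (hv : star v * v = 1) (hv' : v * star v ≠ 1) {n : ℕ}
    (hn : n ≠ 0) : ‖⁅v, v ^ n * star v ^ n⁆‖ = 1 := by
  obtain ⟨m, rfl⟩ := Nat.exists_eq_succ_of_ne_zero hn
  have hP : ‖v ^ (m + 1) * (v * star v - 1)‖ = 1 := by
    rw [norm_pow_mul_mul_star_sub_one hv]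
    exact (isStarProjection_mul_star_of_star_mul_self_eq_one hv).one_sub.norm_eq_one
      (sub_ne_zero.mpr hv'.symm)
  rw [lie_pow_mul_pow_left hv]
  apply le_antisymm
  · calc _ ≤ ‖v ^ (m + 1) * (v * star v - 1)‖ * ‖star v ^ m‖ := norm_mul_le _ _
      _ ≤ 1 := by
        rw [hP, one_mul, ← star_pow, norm_star]
        exact norm_pow_le_one_of_star_mul_self_eq_one hv m
  · calc 1 = ‖v ^ (m + 1) * (v * star v - 1) * star v ^ m * v ^ m‖ := by
          rw [mul_assoc _ (star v ^ m), pow_mul_pow_eq_one m hv, mul_one, hP]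
      _ ≤ ‖v ^ (m + 1) * (v * star v - 1) * star v ^ m‖ * ‖v ^ m‖ := norm_mul_le _ _
      _ ≤ _ := mul_le_of_le_one_right (norm_nonneg _)
          (norm_pow_le_one_of_star_mul_self_eq_one hv m)

theorem norm_lie_star_pow_mul_star_pow_le (hv : star v * v = 1) (n : ℕ) :
    ‖⁅star v, v ^ n * star v ^ n⁆‖ ≤ 1 := by
  cases n with
  | zero => simp [Ring.lie_def]
  | succ m =>
    rw [lie_pow_mul_pow_right hv, ← norm_neg, ← neg_mul, ← mul_neg, neg_sub]
    calc _ ≤ ‖v ^ m * (v * star v - 1)‖ * ‖star v ^ (m + 1)‖ := norm_mul_le _ _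
      _ ≤ 1 := by
        rw [norm_pow_mul_mul_star_sub_one hv, ← star_pow, norm_star]
        exact mul_le_one₀ (isStarProjection_mul_star_of_star_mul_self_eq_one hv).one_sub.norm_le
          (norm_nonneg _) (norm_pow_le_one_of_star_mul_self_eq_one hv _)

end Isometry

section HilbertOperators

variable {𝕜 H : Type*} [RCLike 𝕜] [NormedAddCommGroup H] [InnerProductSpace 𝕜 H]
  [CompleteSpace H] {K L : H →L[𝕜] H}

theorem ContinuousLinearMap.norm_lie_pow_mul_pow_of_adjoint_eq (hadj : adjoint K = L)
    (hLK : L * K = 1) (hKL : K * L ≠ 1) {n : ℕ} (hn : n ≠ 0) : ‖⁅K, K ^ n * L ^ n⁆‖ = 1 := by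
  subst hadj
  rw [← star_eq_adjoint] at hLK hKL ⊢
  exact norm_lie_pow_mul_star_pow hLK hKL hn

theorem ContinuousLinearMap.norm_lie_pow_mul_pow_le_of_adjoint_eq (hadj : adjoint K = L)
    (hLK : L * K = 1) (n : ℕ) : ‖⁅L, K ^ n * L ^ n⁆‖ ≤ 1 := by
  subst hadj
  rw [← star_eq_adjoint] at hLK ⊢
  exact norm_lie_star_pow_mul_star_pow_le hLK n

end HilbertOperators

section BlockOperators

variable {μ : Measure Ω}

theorem blockAntidiag_apply (A B : E μ →L[ℝ] E μ) (x : HS μ) :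
    blockAntidiag A B x = WithLp.toLp 2 (A x.snd, B x.fst) := rfl

theorem commD_eq_blockAntidiag (K L A : E μ →L[ℝ] E μ) :
    commD K L A = blockAntidiag ⁅K, A⁆ ⁅L, A⁆ := rfl

theorem norm_blockAntidiag (A B : E μ →L[ℝ] E μ) :
    ‖blockAntidiag A B‖ = max ‖A‖ ‖B‖ := by
  apply le_antisymm
  · refine opNorm_le_bound _ (le_max_of_le_left (norm_nonneg A)) fun x => ?_
    set M := max ‖A‖ ‖B‖
    have hA : ‖A x.snd‖ ≤ M * ‖x.snd‖ := A.le_of_opNorm_le (le_max_left _ _) _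
    have hB : ‖B x.fst‖ ≤ M * ‖x.fst‖ := B.le_of_opNorm_le (le_max_right _ _) _
    have hx : ‖blockAntidiag A B x‖ ^ 2 = ‖A x.snd‖ ^ 2 + ‖B x.fst‖ ^ 2 :=
      WithLp.prod_norm_sq_eq_of_L2 _
    rw [← sq_le_sq₀ (norm_nonneg _) (by positivity), mul_pow, hx, WithLp.prod_norm_sq_eq_of_L2 x]
    nlinarith [pow_le_pow_left₀ (norm_nonneg _) hA 2, pow_le_pow_left₀ (norm_nonneg _) hB 2]
  · refine max_le (opNorm_le_bound _ (norm_nonneg _) fun ψ => ?_)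
      (opNorm_le_bound _ (norm_nonneg _) fun φ => ?_)
    · simpa [blockAntidiag_apply, WithLp.norm_toLp_fst, WithLp.norm_toLp_snd] using
        (blockAntidiag A B).le_opNorm (WithLp.toLp 2 (0, ψ))
    · simpa [blockAntidiag_apply, WithLp.norm_toLp_fst, WithLp.norm_toLp_snd] using
        (blockAntidiag A B).le_opNorm (WithLp.toLp 2 (φ, 0))

end BlockOperators

section Cylinders

theorem measurable_consSeq (a : Bool) : Measurable (consSeq a) :=
  (continuous_consSeq a).measurable

theorem measurableSet_cylinder (w : List Bool) : MeasurableSet (cylinder w) := by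
  have h : cylinder w = ⋂ i : Fin w.length, (fun x : Ω => x i) ⁻¹' {w.get i} := by
    ext x
    simp only [Set.mem_iInter, Set.mem_preimage, Set.mem_singleton_iff]
    rfl
  exact h ▸ MeasurableSet.iInter fun i => measurable_pi_apply _ (measurableSet_singleton _)

theorem cylinder_nil : cylinder [] = Set.univ :=
  Set.eq_univ_of_forall fun _ i => i.elim0

theorem mem_cylinder_cons {b : Bool} {w : List Bool} {x : Ω} :
    x ∈ cylinder (b :: w) ↔ x 0 = b ∧ shiftMap x ∈ cylinder w := by
  refine ⟨fun h => ⟨h ⟨0, w.length.succ_pos⟩, fun i => h i.succ⟩, fun ⟨h0, h1⟩ i => ?_⟩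
  cases i using Fin.cases with
  | zero => exact h0
  | succ i => exact h1 i

theorem mem_cylinder_ofFn {k : ℕ} {c : Fin k → Bool} {x : Ω} :
    x ∈ cylinder (List.ofFn c) ↔ ∀ j : Fin k, x j = c j := by
  simp [_root_.cylinder, Fin.forall_iff]

theorem cylinder_subset_of_length_le {w v : List Bool} (h : w.length ≤ v.length) {x : Ω}
    (hxw : x ∈ cylinder w) (hxv : x ∈ cylinder v) : cylinder v ⊆ cylinder w := by
  intro y hy i
  have hi : (i : ℕ) < v.length := i.isLt.trans_le h
  calc y i = v.get ⟨i, hi⟩ := hy ⟨i, hi⟩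
    _ = x i := (hxv ⟨i, hi⟩).symm
    _ = w.get i := hxw i

theorem isPiSystem_range_cylinder : IsPiSystem (Set.range cylinder) := by
  rintro _ ⟨w, rfl⟩ _ ⟨v, rfl⟩ ⟨x, hxw, hxv⟩
  rcases le_total w.length v.length with h | h
  · exact ⟨v, (Set.inter_eq_self_of_subset_right (cylinder_subset_of_length_le h hxw hxv)).symm⟩
  · exact ⟨w, (Set.inter_eq_self_of_subset_left (cylinder_subset_of_length_le h hxv hxw)).symm⟩

theorem generateFrom_range_cylinder :
    MeasurableSpace.generateFrom (Set.range cylinder) = MeasurableSpace.pi := by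
  refine le_antisymm (MeasurableSpace.generateFrom_le ?_) (iSup_le fun i => ?_)
  · rintro _ ⟨w, rfl⟩
    exact measurableSet_cylinder w
  refine Measurable.comap_le
    (@measurable_to_countable' Bool Ω _ _ (MeasurableSpace.generateFrom _) _ fun b => ?_)
  have h : (fun x : Ω => x i) ⁻¹' {b} =
      ⋃ c ∈ {c : Fin (i + 1) → Bool | c (Fin.last i) = b}, cylinder (List.ofFn c) := by
    ext x
    simp only [Set.mem_preimage, Set.mem_singleton_iff, Set.mem_iUnion, Set.mem_ofPred_eq,
      mem_cylinder_ofFn, exists_prop]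
    exact ⟨fun hx => ⟨fun j => x j, hx, fun _ => rfl⟩, fun ⟨c, hc, hx⟩ => (hx _).trans hc⟩
  rw [h]
  exact MeasurableSet.biUnion (Set.to_countable _) fun c _ =>
    MeasurableSpace.measurableSet_generateFrom ⟨_, rfl⟩

theorem consSeq_mem_cylinder_cons {a b : Bool} {w : List Bool} {x : Ω} :
    consSeq a x ∈ cylinder (b :: w) ↔ a = b ∧ x ∈ cylinder w :=
  mem_cylinder_cons

theorem mem_cylinder_singleton {a : Bool} {x : Ω} : x ∈ cylinder [a] ↔ x 0 = a := by
  simp [mem_cylinder_cons, cylinder_nil]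

end Cylinders

section BernoulliMeasure

variable {μ : Measure Ω} [IsProbabilityMeasure μ]

theorem map_consSeq (hμ : ∀ w : List Bool, μ (cylinder w) = (1 / 2) ^ w.length) (a : Bool) :
    μ.map (consSeq a) = (2 : ℝ≥0∞) • μ.restrict (cylinder [a]) := by
  have : IsProbabilityMeasure (μ.map (consSeq a)) :=
    Measure.isProbabilityMeasure_map (measurable_consSeq a).aemeasurable
  have h2 : (2 : ℝ≥0∞) * (1 / 2) = 1 := ENNReal.mul_div_cancel two_ne_zero ENNReal.ofNat_ne_top
  have hsingle : (2 : ℝ≥0∞) * μ (cylinder [a]) = 1 := by rw [hμ]; simpa using h2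
  refine ext_of_generate_finite _ generateFrom_range_cylinder.symm isPiSystem_range_cylinder
    ?_ ?_
  · rintro _ ⟨w, rfl⟩
    rw [Measure.map_apply (measurable_consSeq a) (measurableSet_cylinder w),
      Measure.smul_apply, Measure.restrict_apply (measurableSet_cylinder w), smul_eq_mul]
    cases w with
    | nil => simp [cylinder_nil, hsingle]
    | cons b w =>
      by_cases hab : a = b
      · subst hab
        have hpre : consSeq a ⁻¹' cylinder (a :: w) = cylinder w := by
          ext x; simp [consSeq_mem_cylinder_cons]
        have hinter : cylinder (a :: w) ∩ cylinder [a] = cylinder (a :: w) :=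
          Set.inter_eq_left.mpr fun x hx => mem_cylinder_singleton.mpr (mem_cylinder_cons.mp hx).1
        rw [hpre, hinter, hμ, hμ, List.length_cons, pow_succ, mul_left_comm, h2, mul_one]
      · have hpre : consSeq a ⁻¹' cylinder (b :: w) = ∅ := by
          ext x; simp [consSeq_mem_cylinder_cons, hab]
        have hinter : cylinder (b :: w) ∩ cylinder [a] = ∅ := by
          ext x
          simp only [Set.mem_inter_iff, mem_cylinder_singleton, Set.mem_empty_iff_false,
            iff_false, not_and]
          exact fun hx hxa => hab (hxa.symm.trans (mem_cylinder_cons.mp hx).1)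
        simp [hpre, hinter]
  · simp [Measure.map_apply (measurable_consSeq a) MeasurableSet.univ, hsingle]

theorem quasiMeasurePreserving_consSeq
    (hμ : ∀ w : List Bool, μ (cylinder w) = (1 / 2) ^ w.length) (a : Bool) :
    Measure.QuasiMeasurePreserving (consSeq a) μ μ :=
  ⟨measurable_consSeq a, by
    rw [map_consSeq hμ a]
    exact (Measure.absolutelyContinuous_of_le Measure.restrict_le_self).smul_left _⟩

theorem not_injective_of_ruelle (hμ : ∀ w : List Bool, μ (cylinder w) = (1 / 2) ^ w.length)
    {L : E μ →L[ℝ] E μ}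
    (hL : ∀ g : E μ, (L g : Ω → ℝ) =ᵐ[μ]
      fun x => (g (consSeq false x) + g (consSeq true x)) / 2) :
    ¬ Function.Injective L := by
  let s : Bool → ℝ := fun b => if b then 1 else -1
  have hs (b : Bool) : ‖s b‖ = 1 := by cases b <;> simp [s]
  have hf : MemLp (fun x : Ω => s (x 0)) 2 μ := by
    refine MemLp.of_bound ?_ 1 (Filter.Eventually.of_forall fun x => (hs _).le)
    exact ((measurable_from_top (f := s)).comp (measurable_pi_apply 0)).aestronglyMeasurable
  have hu : hf.toLp _ ≠ 0 := fun h => by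
    obtain ⟨x, hx⟩ := (hf.coeFn_toLp.symm.trans (h ▸ Lp.coeFn_zero ℝ 2 μ)).exists
    simpa [hx] using hs (x 0)
  have hLu : L (hf.toLp _) = 0 := by
    have hcomp (a : Bool) := (quasiMeasurePreserving_consSeq hμ a).ae_eq_comp hf.coeFn_toLp
    refine Lp.ext ((hL _).trans ?_)
    filter_upwards [hcomp false, hcomp true, Lp.coeFn_zero ℝ 2 μ] with x h0 h1 hz
    simp only [Function.comp_apply] at h0 h1
    rw [h0, h1, hz]
    norm_num [s, consSeq]
  exact fun hinj => hu (hinj (hLu.trans (map_zero L).symm))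

end BernoulliMeasure

theorem stmt10_general
    (μ : Measure Ω) [IsProbabilityMeasure μ]
    (hμ : ∀ w : List Bool, μ (cylinder w) = (1 / 2) ^ w.length)
    (K L : E μ →L[ℝ] E μ)
    (hL : ∀ g : E μ, (L g : Ω → ℝ) =ᵐ[μ]
      fun x => (g (consSeq false x) + g (consSeq true x)) / 2)
    (hadj : ContinuousLinearMap.adjoint K = L)
    (hLK : L ∘L K = ContinuousLinearMap.id ℝ (E μ))
    (n : ℕ) (hn : 1 ≤ n) :
    ‖commD K L ((K ^ n) ∘L (L ^ n))‖ = 1 := by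
  have hLK' : L * K = 1 := hLK
  have hKL : K * L ≠ 1 := fun h =>
    not_injective_of_ruelle hμ hL (Function.LeftInverse.injective (g := K) fun g => by
      rw [← mul_apply_eq_comp, h, one_apply_eq_self])
  have h₁ := norm_lie_pow_mul_pow_of_adjoint_eq hadj hLK' hKL (Nat.one_le_iff_ne_zero.mp hn)
  have h₂ := norm_lie_pow_mul_pow_le_of_adjoint_eq hadj hLK' n
  rw [commD_eq_blockAntidiag, norm_blockAntidiag, ← mul_def, h₁]
  exact max_eq_left h₂

/-- For every `n ≥ 1`, `‖[D, π(KⁿLⁿ)]‖ = 1`. -/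
theorem stmt10
    (μ : Measure Ω) [IsProbabilityMeasure μ]
    (hμ : ∀ w : List Bool, μ (cylinder w) = (1 / 2) ^ w.length)
    (K L : E μ →L[ℝ] E μ)
    (hK : ∀ g : E μ, (K g : Ω → ℝ) =ᵐ[μ] fun x => g (shiftMap x))
    (hL : ∀ g : E μ, (L g : Ω → ℝ) =ᵐ[μ]
      fun x => (g (consSeq false x) + g (consSeq true x)) / 2)
    (hadj : ContinuousLinearMap.adjoint K = L)
    (hLK : L ∘L K = ContinuousLinearMap.id ℝ (E μ))
    (n : ℕ) (hn : 1 ≤ n) :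
    ‖commD K L ((K ^ n) ∘L (L ^ n))‖ = 1 :=
  stmt10_general μ hμ K L hL hadj hLK n hn
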